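/- arXiv:2208.10595 — 5 statements merged into one kernel-verified Lean document; each statement's English description precedes it below -/
import Mathlib

section
/- Let (a, b, c) be a Markov triple of positive integers with a ≤ b ≤ c and c > 2. Then ab < c - 1. -/
/-!
Replacing `c` by its Vieta partner `c' = 3ab - c` gives another solution, and `c * c' = a² + b²`.
Since `a ≤ b ≤ c`, this forces `c' ≤ 2b`, hence `c = 3ab - c' ≥ ab + 2b(a - 1)`, which settles `a ≥ 2`.
For `a = 1` the equation `1 + b² + c² = 3bc` leaves only `c = 1, 2` when `c ≤ b + 1`.
-/

theorem Markov.mul_vieta_partner {a b c : ℤ} (h : a ^ 2 + b ^ 2 + c ^ 2 = 3 * a * b * c) :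
    c * (3 * a * b - c) = a ^ 2 + b ^ 2 := by
  linear_combination -h

theorem le_two_mul_of_mul_eq_sq_add_sq {a b c d : ℤ} (ha : 0 ≤ a) (hab : a ≤ b) (hbc : b ≤ c)
    (hc : 0 < c) (hcd : c * d = a ^ 2 + b ^ 2) : d ≤ 2 * b := by
  refine le_of_mul_le_mul_left ?_ hc
  calc c * d = a ^ 2 + b ^ 2 := hcd
    _ ≤ 2 * b ^ 2 := by nlinarith
    _ ≤ c * (2 * b) := by nlinarith

theorem Markov.mul_add_two_le_of_two_le {a b c : ℤ} (ha : 2 ≤ a) (hab : a ≤ b) (hbc : b ≤ c)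
    (h : a ^ 2 + b ^ 2 + c ^ 2 = 3 * a * b * c) : a * b + 2 ≤ c := by
  have hpartner : 3 * a * b - c ≤ 2 * b :=
    le_two_mul_of_mul_eq_sq_add_sq (by omega) hab hbc (by omega) (Markov.mul_vieta_partner h)
  calc a * b + 2 ≤ a * b + 2 * b * (a - 1) := by nlinarith
    _ ≤ c := by linarith

theorem Markov.add_two_le_of_fst_eq_one {b c : ℤ} (hbc : b ≤ c) (hc : 2 < c)
    (h : 1 ^ 2 + b ^ 2 + c ^ 2 = 3 * 1 * b * c) : b + 2 ≤ c := by
  by_contra! hlt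
  obtain rfl | rfl : c = b ∨ c = b + 1 := by omega
  · nlinarith
  · nlinarith

theorem markov_ab_lt_c_sub_one_general (a b c : ℤ) (ha : 0 < a)
    (hab : a ≤ b) (hbc : b ≤ c) (hc2 : 2 < c)
    (h : a ^ 2 + b ^ 2 + c ^ 2 = 3 * a * b * c) :
    a * b < c - 1 := by
  obtain rfl | ha2 : a = 1 ∨ 2 ≤ a := by omega
  · linarith [Markov.add_two_le_of_fst_eq_one hbc hc2 h]
  · linarith [Markov.mul_add_two_le_of_two_le ha2 hab hbc h]

/-- For any Markov triple `(a, b, c)` with `a ≤ b ≤ c` and `c > 2`, one has `ab < c - 1`. -/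
theorem markov_ab_lt_c_sub_one (a b c : ℤ) (ha : 0 < a) (hb : 0 < b) (hc : 0 < c)
    (hab : a ≤ b) (hbc : b ≤ c) (hc2 : 2 < c)
    (h : a ^ 2 + b ^ 2 + c ^ 2 = 3 * a * b * c) :
    a * b < c - 1 :=
  markov_ab_lt_c_sub_one_general a b c ha hab hbc hc2 h
end

section
/- Let p, q, r be pairwise coprime positive integers satisfying (p + q + r)^2 = 9pqr. Then there exist positive integers a, b, c with p = a^2, q = b^2, r = c^2, and (a, b, c) is a Markov triple, i.e. a^2 + b^2 + c^2 = 3abc. -/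
/-!
Since `9 = 3²`, the hypothesis forces `p + q + r = 3s` with `s² = pqr`. A product of pairwise
coprime naturals that is a square has square factors, so `p = a²`, `q = b²`, `r = c²` and
`s = abc`; then `a² + b² + c² = p + q + r = 3abc`.
-/

theorem Nat.exists_eq_pow_of_coprime_of_mul_eq_pow {a b c n : ℕ} (hab : a.Coprime b)
    (h : a * b = c ^ n) : ∃ d, a = d ^ n :=
  exists_eq_pow_of_mul_eq_pow (Nat.isUnit_iff.mpr hab) h

theorem Nat.exists_eq_pow_of_coprime_of_mul_mul_eq_pow {p q r s n : ℕ} (hn : n ≠ 0)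
    (hpq : p.Coprime q) (hpr : p.Coprime r) (hqr : q.Coprime r) (h : p * q * r = s ^ n) :
    ∃ a b c, p = a ^ n ∧ q = b ^ n ∧ r = c ^ n ∧ s = a * b * c := by
  obtain ⟨a, rfl⟩ := exists_eq_pow_of_coprime_of_mul_eq_pow (hpq.mul_right hpr)
    (by rw [← mul_assoc, h])
  obtain ⟨b, rfl⟩ := exists_eq_pow_of_coprime_of_mul_eq_pow (hpq.symm.mul_right hqr)
    (by rw [← h]; ring)
  obtain ⟨c, rfl⟩ := exists_eq_pow_of_coprime_of_mul_eq_pow (hpr.symm.mul_right hqr.symm)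
    (by rw [← h]; ring)
  refine ⟨a, b, c, rfl, rfl, rfl, Nat.pow_left_injective hn ?_⟩
  change s ^ n = (a * b * c) ^ n
  rw [← h, mul_pow, mul_pow]

theorem Nat.exists_eq_mul_of_sq_eq_sq_mul {x k m : ℕ} (hk : k ≠ 0) (h : x ^ 2 = k ^ 2 * m) :
    ∃ s, x = k * s ∧ s ^ 2 = m := by
  obtain ⟨s, rfl⟩ : k ∣ x := (Nat.pow_dvd_pow_iff two_ne_zero).mp ⟨m, h⟩
  refine ⟨s, rfl, ?_⟩
  rw [mul_pow] at h
  exact Nat.eq_of_mul_eq_mul_left (by positivity) h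

/-- If `p, q, r` are pairwise coprime positive integers with `(p + q + r)² = 9pqr`
(equal anticanonical volume with `ℙ²`), then `p, q, r` are perfect squares `a², b², c²`
and `(a, b, c)` is a Markov triple. -/
theorem weighted_projective_volume_markov (p q r : ℕ) (hp : 0 < p) (hq : 0 < q) (hr : 0 < r)
    (hpq : Nat.Coprime p q) (hpr : Nat.Coprime p r) (hqr : Nat.Coprime q r)
    (h : (p + q + r) ^ 2 = 9 * (p * q * r)) :
    ∃ a b c : ℕ, 0 < a ∧ 0 < b ∧ 0 < c ∧ p = a ^ 2 ∧ q = b ^ 2 ∧ r = c ^ 2 ∧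
      a ^ 2 + b ^ 2 + c ^ 2 = 3 * (a * b * c) := by
  obtain ⟨s, hsum, hprod⟩ := Nat.exists_eq_mul_of_sq_eq_sq_mul (k := 3) three_ne_zero h
  obtain ⟨a, b, c, rfl, rfl, rfl, rfl⟩ :=
    Nat.exists_eq_pow_of_coprime_of_mul_mul_eq_pow two_ne_zero hpq hpr hqr hprod.symm
  have pos_of_sq_pos {x : ℕ} : 0 < x ^ 2 → 0 < x := (pow_pos_iff two_ne_zero).mp
  exact ⟨a, b, c, pos_of_sq_pos hp, pos_of_sq_pos hq, pos_of_sq_pos hr, rfl, rfl, rfl, hsum⟩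
end

section
/- Let k ≥ 1 and let M₁, …, Mₖ and N₁, …, Nₖ be positive integers satisfying: M_j ≥ 2·M_{j+1} for all 1 ≤ j ≤ k-1, Mₖ ≥ 2, and N₁ ≥ M₁ + 1. Define S := (M₁ - 1)(N₁ - 1) + Σ_{j=2}^{k} (M_j - 1)·N_j. Then S ≥ (2^k - 1)·2^k, and if moreover k ≥ 2 then the stronger strict inequality S > (2^k - 1)·2^k holds. In particular, if k = 2 then S ≥ 13, and if k = 3 then S ≥ 57. -/
/-!
Since `M_j ≥ 2 M_{j+1}` and `M_k ≥ 2`, every `M_j` is at least `2^(k-j+1)`; in particular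
`M₁ ≥ 2^k` and `N₁ - 1 ≥ M₁ ≥ 2^k`, so the first term alone is at least `(2^k - 1) 2^k`.
Each of the remaining `k - 1` terms `(M_j - 1) N_j` is at least `1`, which gives strictness
for `k ≥ 2`; the bounds `13` and `57` are the cases `k = 2, 3`.
-/

theorem pow_sub_mul_le_of_mul_le {R : Type*} [Semiring R] [PartialOrder R] [IsOrderedRing R]
    {c : R} (hc : 0 ≤ c) {M : ℕ → R} {a k : ℕ}
    (hstep : ∀ j, a ≤ j → j < k → c * M (j + 1) ≤ M j) {j : ℕ} (haj : a ≤ j) (hjk : j ≤ k) :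
    c ^ (k - j) * M k ≤ M j := by
  refine Nat.decreasingInduction' (P := fun i => c ^ (k - i) * M k ≤ M i) ?_ hjk (by simp)
  intro i hik hji ih
  calc c ^ (k - i) * M k = c * (c ^ (k - (i + 1)) * M k) := by
        rw [← mul_assoc, ← pow_succ', Nat.sub_add_eq, Nat.sub_add_cancel (by omega)]
    _ ≤ c * M (i + 1) := mul_le_mul_of_nonneg_left ih hc
    _ ≤ M i := hstep i (haj.trans hji) hik

theorem sub_one_le_sum_Icc_two {k : ℕ} {M N : ℕ → ℤ}
    (hM : ∀ j, 2 ≤ j → j ≤ k → 2 ≤ M j) (hN : ∀ j, 2 ≤ j → j ≤ k → 0 < N j) :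
    (k : ℤ) - 1 ≤ ∑ j ∈ Finset.Icc 2 k, (M j - 1) * N j := by
  have hterm : ∀ j ∈ Finset.Icc 2 k, 1 ≤ (M j - 1) * N j := fun j hj => by
    rw [Finset.mem_Icc] at hj
    exact one_le_mul_of_one_le_of_one_le (by linarith [hM j hj.1 hj.2]) (hN j hj.1 hj.2)
  have hcard := Finset.card_nsmul_le_sum _ _ 1 hterm
  rw [Nat.card_Icc, nsmul_one] at hcard
  omega

theorem newton_pairs_delta_bound_general (k : ℕ) (hk : 1 ≤ k) (M N : ℕ → ℤ)
    (hNpos : ∀ j, 1 ≤ j → j ≤ k → 0 < N j)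
    (hMstep : ∀ j, 1 ≤ j → j ≤ k - 1 → 2 * M (j + 1) ≤ M j)
    (hMk : 2 ≤ M k)
    (hN1 : M 1 + 1 ≤ N 1) :
    (2 ^ k - 1) * 2 ^ k ≤
        (M 1 - 1) * (N 1 - 1) + ∑ j ∈ Finset.Icc 2 k, (M j - 1) * N j ∧
      (2 ≤ k → (2 ^ k - 1) * 2 ^ k <
        (M 1 - 1) * (N 1 - 1) + ∑ j ∈ Finset.Icc 2 k, (M j - 1) * N j) ∧
      (k = 2 → (13 : ℤ) ≤
        (M 1 - 1) * (N 1 - 1) + ∑ j ∈ Finset.Icc 2 k, (M j - 1) * N j) ∧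
      (k = 3 → (57 : ℤ) ≤
        (M 1 - 1) * (N 1 - 1) + ∑ j ∈ Finset.Icc 2 k, (M j - 1) * N j) := by
  have hM : ∀ j, 1 ≤ j → j ≤ k → 2 ^ (k - j + 1) ≤ M j := fun j h1 h2 =>
    calc (2 : ℤ) ^ (k - j + 1) = 2 ^ (k - j) * 2 := pow_succ _ _
      _ ≤ 2 ^ (k - j) * M k := by gcongr
      _ ≤ M j := pow_sub_mul_le_of_mul_le zero_le_two
          (fun i hi hik => hMstep i hi (by omega)) h1 h2
  have hM1 : 2 ^ k ≤ M 1 := by simpa [Nat.sub_add_cancel hk] using hM 1 le_rfl hk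
  have hhead : (2 ^ k - 1) * 2 ^ k ≤ (M 1 - 1) * (N 1 - 1) := by
    have hpow : (1 : ℤ) ≤ 2 ^ k := one_le_pow₀ one_le_two
    exact mul_le_mul (by linarith) (by linarith) (by positivity) (by linarith)
  have htail := sub_one_le_sum_Icc_two (M := M) (N := N)
    (fun j h2 hjk => (le_self_pow₀ one_le_two (by omega)).trans (hM j (by omega) hjk))
    (fun j h2 hjk => hNpos j (by omega) hjk)
  have hstrict : 2 ≤ k → (2 ^ k - 1) * 2 ^ k <
      (M 1 - 1) * (N 1 - 1) + ∑ j ∈ Finset.Icc 2 k, (M j - 1) * N j := fun hk2 => by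
    have : (2 : ℤ) ≤ k := by exact_mod_cast hk2
    linarith
  refine ⟨by linarith, hstrict, fun hk2 => ?_, fun hk3 => ?_⟩
  · simpa [hk2] using Int.add_one_le_of_lt (hstrict hk2.ge)
  · simpa [hk3] using Int.add_one_le_of_lt (hstrict (by omega))

/-- Bound on (twice) the delta-invariant of a cusp with `k` Newton pairs.
Given positive integers `M₁, …, M_k`, `N₁, …, N_k` with `M_j ≥ 2·M_{j+1}` for
`1 ≤ j ≤ k - 1`, `M_k ≥ 2` and `N₁ ≥ M₁ + 1`, the quantity
`S = (M₁ - 1)(N₁ - 1) + ∑_{j=2}^k (M_j - 1)·N_j` satisfies `S ≥ (2^k - 1)·2^k`,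
the inequality being strict when `k ≥ 2`; in particular `S ≥ 13` when `k = 2`
and `S ≥ 57` when `k = 3`. -/
theorem newton_pairs_delta_bound (k : ℕ) (hk : 1 ≤ k) (M N : ℕ → ℤ)
    (hMpos : ∀ j, 1 ≤ j → j ≤ k → 0 < M j)
    (hNpos : ∀ j, 1 ≤ j → j ≤ k → 0 < N j)
    (hMstep : ∀ j, 1 ≤ j → j ≤ k - 1 → 2 * M (j + 1) ≤ M j)
    (hMk : 2 ≤ M k)
    (hN1 : M 1 + 1 ≤ N 1) :
    (2 ^ k - 1) * 2 ^ k ≤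
        (M 1 - 1) * (N 1 - 1) + ∑ j ∈ Finset.Icc 2 k, (M j - 1) * N j ∧
      (2 ≤ k → (2 ^ k - 1) * 2 ^ k <
        (M 1 - 1) * (N 1 - 1) + ∑ j ∈ Finset.Icc 2 k, (M j - 1) * N j) ∧
      (k = 2 → (13 : ℤ) ≤
        (M 1 - 1) * (N 1 - 1) + ∑ j ∈ Finset.Icc 2 k, (M j - 1) * N j) ∧
      (k = 3 → (57 : ℤ) ≤
        (M 1 - 1) * (N 1 - 1) + ∑ j ∈ Finset.Icc 2 k, (M j - 1) * N j) :=
  newton_pairs_delta_bound_general k hk M N hNpos hMstep hMk hN1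
end

section
/- Let Γ be a finite simple graph on a vertex set V = G ⊍ Y (a disjoint union of 'green' vertices G and 'yellow' vertices Y) such that: Γ is a tree (connected and acyclic); every edge of Γ joins a vertex of G to a vertex of Y; every vertex of Y has degree at least 2; any two distinct vertices of G are at graph distance exactly 2; and G has at least 2 elements. Then Y consists of exactly one vertex y, every vertex of G is adjacent to y, and every vertex of G has degree exactly 1 (so Γ is a star with center y). -/
/-- Combinatorial core of the classification of intersection graphs of reduced
central fibers: if `Γ` is a finite tree whose vertices are partitioned into green
vertices `G` and yellow vertices `Y`, every edge joins a green vertex to a yellow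
vertex, every yellow vertex has degree at least `2`, any two distinct green vertices
are at graph distance exactly `2`, and there are at least two green vertices, then
`Y` consists of a single vertex `y`, every green vertex is adjacent to `y`, and every
green vertex has degree exactly `1` (so `Γ` is a star with center `y`). -/
theorem tree_bipartite_star (V : Type*) [Fintype V] (Γ : SimpleGraph V)
    [DecidableRel Γ.Adj] (G Y : Set V)
    (hpart : ∀ v : V, (v ∈ G ∧ v ∉ Y) ∨ (v ∈ Y ∧ v ∉ G))
    (htree : Γ.IsTree)
    (hbip : ∀ v w : V, Γ.Adj v w → (v ∈ G ∧ w ∈ Y) ∨ (v ∈ Y ∧ w ∈ G))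
    (hdegY : ∀ y ∈ Y, 2 ≤ Γ.degree y)
    (hdist : ∀ g₁ ∈ G, ∀ g₂ ∈ G, g₁ ≠ g₂ → Γ.dist g₁ g₂ = 2)
    (hG2 : ∃ g₁ ∈ G, ∃ g₂ ∈ G, g₁ ≠ g₂) :
    ∃ y : V, Y = {y} ∧ ∀ g ∈ G, Γ.Adj g y ∧ Γ.degree g = 1 := by
  obtain ⟨g₁, hg₁, g₂, hg₂, hne⟩ := hG2
  have hconn := htree.isConnected
  have hGY : ∀ u ∈ G, ∀ v ∈ Y, u ≠ v := by
    intro u hu v hv h; subst h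
    rcases hpart u with ⟨_, h⟩ | ⟨_, h⟩
    · exact h hv
    · exact h hu
  have hadjY : ∀ g ∈ G, ∀ v, Γ.Adj g v → v ∈ Y := by
    intro g hg v h
    rcases hbip g v h with ⟨_, hv⟩ | ⟨hgy, _⟩
    · exact hv
    · exact absurd hgy (fun hgy => hGY g hg g hgy rfl)
  have hadjG : ∀ y ∈ Y, ∀ v, Γ.Adj y v → v ∈ G := by
    intro y hy v h
    rcases hbip y v h with ⟨hyG, _⟩ | ⟨_, hv⟩
    · exact absurd hyG (fun hyG => hGY y hyG y hy rfl)
    · exact hv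
  -- common neighbor of two distinct greens
  have hmid : ∀ g ∈ G, ∀ g' ∈ G, g ≠ g' → ∃ a, Γ.Adj g a ∧ Γ.Adj a g' := by
    intro g hg g' hg' hne'
    obtain ⟨p, hp, hlen⟩ := hconn.exists_path_of_dist g g'
    rw [hdist g hg g' hg' hne'] at hlen
    cases p with
    | nil => simp at hlen
    | cons h q =>
      cases q with
      | nil => simp at hlen
      | cons h' q' =>
        cases q' with
        | nil => exact ⟨_, h, h'⟩
        | cons h'' q'' => simp [SimpleGraph.Walk.length_cons] at hlen
  -- every green vertex has at most one neighbor
  have huniq : ∀ g ∈ G, ∀ a b, Γ.Adj g a → Γ.Adj g b → a = b := by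
    intro g hg a b ha hb
    by_contra hab
    have haY := hadjY g hg a ha
    have hbY := hadjY g hg b hb
    have hex : ∀ y ∈ Y, ∃ g', Γ.Adj y g' ∧ g' ≠ g := by
      intro y hy
      by_contra hno
      push_neg at hno
      have hle : Γ.degree y ≤ 1 := by
        rw [SimpleGraph.degree]
        apply Finset.card_le_one.mpr
        intro u hu v hv
        rw [SimpleGraph.mem_neighborFinset] at hu hv
        rw [hno u hu, hno v hv]
      have := hdegY y hy
      omega
    obtain ⟨ga, hga, hgane⟩ := hex a haY
    obtain ⟨gb, hgb, hgbne⟩ := hex b hbY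
    have hgaG : ga ∈ G := hadjG a haY ga hga
    have hgbG : gb ∈ G := hadjG b hbY gb hgb
    have hag : a ≠ g := fun h => (hGY g hg a haY) h.symm
    have hbg : b ≠ g := fun h => (hGY g hg b hbY) h.symm
    by_cases hgg : ga = gb
    · -- two distinct length-2 paths from ga to g
      subst hgg
      obtain ⟨w, -, huniqp⟩ := htree.existsUnique_path ga g
      have hq1 : (SimpleGraph.Walk.cons hga.symm
          (SimpleGraph.Walk.cons (ha.symm) .nil) : Γ.Walk ga g).IsPath := by
        simp [SimpleGraph.Walk.cons_isPath_iff]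
        exact ⟨hag, hGY ga hgaG a haY, hgane⟩
      have hq2 : (SimpleGraph.Walk.cons hgb.symm
          (SimpleGraph.Walk.cons (hb.symm) .nil) : Γ.Walk ga g).IsPath := by
        simp [SimpleGraph.Walk.cons_isPath_iff]
        exact ⟨hbg, hGY ga hgaG b hbY, hgbne⟩
      have e := (huniqp _ hq1).trans (huniqp _ hq2).symm
      have := congrArg SimpleGraph.Walk.support e
      simp [SimpleGraph.Walk.support_cons] at this
      exact hab this
    · -- a path of length 4 between distinct greens, contradicting dist = 2
      obtain ⟨p, hp, hlen⟩ := hconn.exists_path_of_dist ga gb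
      rw [hdist ga hgaG gb hgbG hgg] at hlen
      obtain ⟨w, -, huniqp⟩ := htree.existsUnique_path ga gb
      have hq : (SimpleGraph.Walk.cons hga.symm (SimpleGraph.Walk.cons ha.symm
          (SimpleGraph.Walk.cons hb (SimpleGraph.Walk.cons hgb .nil))) :
          Γ.Walk ga gb).IsPath := by
        simp [SimpleGraph.Walk.cons_isPath_iff]
        exact ⟨⟨⟨fun h => hGY gb hgbG b hbY h.symm, fun h => hGY g hg b hbY h,
          fun h => hgbne h.symm⟩, hag, hab, fun h => hGY gb hgbG a haY h.symm⟩,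
          fun h => hGY ga hgaG a haY h, hgane, fun h => hGY ga hgaG b hbY h, hgg⟩
      have e := (huniqp _ hq).trans (huniqp _ hp).symm
      have := congrArg SimpleGraph.Walk.length e
      simp [SimpleGraph.Walk.length_cons, hlen] at this
  -- every green vertex has a neighbor
  have hnbr : ∀ g ∈ G, ∃ a, Γ.Adj g a := by
    intro g hg
    rcases eq_or_ne g g₁ with rfl | h
    · obtain ⟨a, ha, -⟩ := hmid g hg g₂ hg₂ hne; exact ⟨a, ha⟩
    · obtain ⟨a, ha, -⟩ := hmid g hg g₁ hg₁ h; exact ⟨a, ha⟩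
  obtain ⟨y, hy1, hy2⟩ := hmid g₁ hg₁ g₂ hg₂ hne
  have hyY : y ∈ Y := hadjY g₁ hg₁ y hy1
  -- every green vertex is adjacent to y
  have hadjy : ∀ g ∈ G, Γ.Adj g y := by
    intro g hg
    rcases eq_or_ne g g₁ with rfl | h
    · exact hy1
    · obtain ⟨a, ha, ha'⟩ := hmid g hg g₁ hg₁ h
      have : a = y := huniq g₁ hg₁ a y ha'.symm hy1
      exact this ▸ ha
  refine ⟨y, ?_, ?_⟩
  · ext v
    simp only [Set.mem_singleton_iff]
    constructor
    · intro hv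
      have hpos : 0 < Γ.degree v := lt_of_lt_of_le (by norm_num) (hdegY v hv)
      obtain ⟨g, hgadj⟩ := (SimpleGraph.degree_pos_iff_exists_adj Γ v).mp hpos
      have hgG : g ∈ G := hadjG v hv g hgadj
      exact huniq g hgG v y hgadj.symm (hadjy g hgG)
    · intro h; exact h ▸ hyY
  · intro g hg
    refine ⟨hadjy g hg, ?_⟩
    have h1 : 0 < Γ.degree g := (SimpleGraph.degree_pos_iff_exists_adj Γ g).mpr (hnbr g hg)
    have h2 : Γ.degree g ≤ 1 := by
      rw [SimpleGraph.degree]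
      apply Finset.card_le_one.mpr
      intro u hu v hv
      rw [SimpleGraph.mem_neighborFinset] at hu hv
      exact huniq g hg u v hu hv
    omega
end

section
/- Let A be a commutative Noetherian integral domain with the property that for every prime ideal p of A of height at least 2, the module Ext¹_A(A/p, A) vanishes. Let B be a ring with A ⊆ B ⊆ Frac(A) such that B is finitely generated as an A-module, and suppose that for every prime ideal p of A of height at most 1 the localization map makes A_p = B_p inside Frac(A) (equivalently, the inclusion A → B becomes an isomorphism after localizing at every prime of height at most 1). Then A = B. -/
/-!
Pick `b ∈ B` whose ideal of denominators `p = {a | a • b ∈ A}` is prime: an associated prime of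
the nonzero `A`-module `B / A`, which exists because `A` is Noetherian. If `ht p ≤ 1`, then
`b ∈ A_p` gives some `s ∉ p` with `s • b ∈ A`, i.e. `s ∈ p`. If `ht p ≥ 2`, then
`Ext¹(A/p, A) = 0` makes every `A`-linear map `p → A` a multiplication by some `c ∈ A`; applied
to multiplication by `b`, this gives `b = c` because `p ≠ 0`, so `p = ⊤`.
-/

open CategoryTheory

universe u

namespace Submodule

variable {R M : Type*} [CommRing R] [IsNoetherianRing R] [AddCommGroup M] [Module R M]

theorem exists_mem_isPrime_colon_singleton {N P : Submodule R M} (hPN : ¬P ≤ N) :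
    ∃ x ∈ P, (N.colon {x}).IsPrime := by
  let Q := P ⧸ N.comap P.subtype
  obtain ⟨y, hy, hyN⟩ := SetLike.not_le_iff_exists.mp hPN
  have hy0 : (Submodule.Quotient.mk ⟨y, hy⟩ : Q) ≠ 0 := by
    rwa [Ne, Submodule.Quotient.mk_eq_zero]
  obtain ⟨I, hI, -⟩ := exists_le_isAssociatedPrime_of_isNoetherianRing R _ hy0
  obtain ⟨hIprime, x, rfl⟩ := isAssociatedPrime_iff.mp hI
  obtain ⟨x, rfl⟩ := Submodule.Quotient.mk_surjective _ x
  refine ⟨x, x.2, ?_⟩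
  convert hIprime using 1
  ext r
  simp [mem_colon_singleton, ← Submodule.Quotient.mk_smul, Submodule.Quotient.mk_eq_zero]

end Submodule

namespace CategoryTheory.ProjectiveResolution

variable {R : Type*} [Ring R] {C : Type*} [Category C] [Abelian C] [Linear R C]
  [EnoughProjectives C] {X : C} (P : ProjectiveResolution X)

theorem exists_d_comp_eq_of_subsingleton_ext_one {Y : C}
    [Subsingleton (((Ext R C 1).obj (Opposite.op X)).obj Y)]
    (y : P.complex.X 1 ⟶ Y) (hy : P.complex.d 2 1 ≫ y = 0) :
    ∃ ψ : P.complex.X 0 ⟶ Y, P.complex.d 1 0 ≫ ψ = y := by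
  let CC := P.complex.linearYonedaObj R Y
  have hexact : CC.ExactAt 1 := (HomologicalComplex.exactAt_iff_isZero_homology _ _).mpr <|
    Limits.IsZero.of_iso (ModuleCat.isZero_of_subsingleton _) (P.isoExt 1 Y).symm
  exact (ShortComplex.moduleCat_exact_iff _).mp
    ((HomologicalComplex.exactAt_iff' CC 0 1 2 (by simp) (by simp)).mp hexact) y hy

end CategoryTheory.ProjectiveResolution

namespace Ideal

variable {A : Type u} [CommRing A]

theorem exists_eq_mul_of_mul_eq_mul {p : Ideal A} {f : p →ₗ[A] A} {s c : A} (hs : s - 1 ∈ p)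
    (hf : ∀ x : p, s * f x = c * x) : ∃ c' : A, ∀ x : p, f x = c' * x := by
  refine ⟨c - f ⟨s - 1, hs⟩, fun x => ?_⟩
  have hcomm : (s - 1) • x = (x : A) • (⟨s - 1, hs⟩ : p) := Subtype.ext (mul_comm _ _)
  have := congrArg f hcomm
  rw [map_smul, map_smul, smul_eq_mul, smul_eq_mul] at this
  linear_combination hf x - this

theorem exists_eq_mul_of_subsingleton_ext_one (p : Ideal A)
    [Subsingleton (((Ext A (ModuleCat.{u} A) 1).obj
      (Opposite.op (ModuleCat.of A (A ⧸ p)))).obj (ModuleCat.of A A))]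
    (f : p →ₗ[A] A) : ∃ c : A, ∀ x : p, f x = c * x := by
  -- Compare a projective resolution `P` of `A ⧸ p` with `0 → p → A → A ⧸ p → 0`: a lift
  -- `α₀ : P₀ → A` restricts to `α₁ : P₁ → p`, and the cocycle `f ∘ α₁` is a coboundary `ψ ∘ d`.
  obtain ⟨P⟩ : Nonempty (ProjectiveResolution (ModuleCat.of A (A ⧸ p))) :=
    HasProjectiveResolution.out
  let π₀ : P.complex.X 0 ⟶ ModuleCat.of A (A ⧸ p) := P.π.f 0
  let d₁₀ := P.complex.d 1 0
  let q : ModuleCat.of A A ⟶ ModuleCat.of A (A ⧸ p) := ModuleCat.ofHom p.mkQ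
  have : Epi q := (ModuleCat.epi_iff_surjective q).mpr p.mkQ_surjective
  let α₀ := Projective.factorThru π₀ q
  have hα₀ (w : P.complex.X 0) : p.mkQ (α₀ w) = π₀ w :=
    congr($(Projective.factorThru_comp π₀ q).hom w)
  have hπ₀ (u : P.complex.X 1) : π₀ (d₁₀ u) = 0 := congr($(P.complex_d_comp_π_f_zero).hom u)
  let α₁ : P.complex.X 1 →ₗ[A] p := (d₁₀ ≫ α₀).hom.codRestrict p fun u => by
    rw [← Submodule.Quotient.mk_eq_zero p]
    exact (hα₀ _).trans (hπ₀ u)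
  have hcocycle : P.complex.d 2 1 ≫ ModuleCat.ofHom (f ∘ₗ α₁) = 0 := by
    ext v
    have hdd : d₁₀ (P.complex.d 2 1 v) = 0 := congr($(P.complex.d_comp_d 2 1 0).hom v)
    have : α₁ (P.complex.d 2 1 v) = 0 := Subtype.ext (by simp [α₁, hdd])
    simp [this]
  obtain ⟨ψ, hψ⟩ := P.exists_d_comp_eq_of_subsingleton_ext_one (R := A) _ hcocycle
  obtain ⟨t, ht⟩ := (ModuleCat.epi_iff_surjective π₀).mp (inferInstanceAs (Epi (P.π.f 0)))
    (Submodule.Quotient.mk 1)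
  refine exists_eq_mul_of_mul_eq_mul (s := α₀ t) (c := ψ t) ?_ fun x => ?_
  · rw [← Submodule.Quotient.eq p]
    exact (hα₀ t).trans ht
  · have hxt : π₀ ((x : A) • t) = 0 := by
      rw [map_smul, ht, ← Submodule.Quotient.mk_smul, smul_eq_mul, mul_one,
        Submodule.Quotient.mk_eq_zero]
      exact x.2
    obtain ⟨u, hu⟩ := (ShortComplex.moduleCat_exact_iff _).mp P.exact₀ _ hxt
    have hα₁u : α₁ u = α₀ t • x := Subtype.ext <| by
      change α₀ (d₁₀ u) = α₀ t * x
      rw [hu, map_smul, smul_eq_mul, mul_comm]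
    have hψu : ψ (d₁₀ u) = f (α₁ u) := congr($(hψ).hom u)
    rw [hα₁u, map_smul, hu, map_smul] at hψu
    simpa [mul_comm] using hψu.symm

end Ideal

theorem Submodule.mem_one_of_le_colon_singleton {A K : Type*} [CommRing A] [IsDomain A] [Field K]
    [Algebra A K] [IsFractionRing A K] {p : Ideal A} (hp : p ≠ ⊥)
    (hext : ∀ f : p →ₗ[A] A, ∃ c : A, ∀ x : p, f x = c * x) {b : K}
    (hb : p ≤ (1 : Submodule A K).colon {b}) : b ∈ (1 : Submodule A K) := by
  have hinj := IsFractionRing.injective A K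
  let e := LinearEquiv.ofInjective (Algebra.linearMap A K) hinj
  let mulB : p →ₗ[A] LinearMap.range (Algebra.linearMap A K) :=
    ((LinearMap.toSpanSingleton A K b) ∘ₗ p.subtype).codRestrict _ fun x => by
      rw [← Submodule.one_eq_range]
      exact Submodule.mem_colon_singleton.mp (hb x.2)
  obtain ⟨c, hc⟩ := hext (e.symm.toLinearMap ∘ₗ mulB)
  obtain ⟨x, hxp, hx0⟩ := Submodule.exists_mem_ne_zero_of_ne_bot hp
  have hxb : algebraMap A K x * b = algebraMap A K x * algebraMap A K c := by
    have := congrArg (algebraMap A K) (hc ⟨x, hxp⟩)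
    rw [map_mul, mul_comm] at this
    rw [← this, ← Algebra.smul_def]
    exact (congrArg Subtype.val (e.apply_symm_apply (mulB ⟨x, hxp⟩))).symm
  rw [mul_left_cancel₀ ((map_ne_zero_iff _ hinj).mpr hx0) hxb]
  exact Submodule.mem_one.mpr ⟨c, rfl⟩

theorem s2_birational_iso_general (A : Type*) [CommRing A] [IsDomain A] [IsNoetherianRing A]
    (hExt : ∀ p : Ideal A, p.IsPrime →
      (∃ q₁ q₂ : Ideal A, q₁.IsPrime ∧ q₂.IsPrime ∧ q₁ < q₂ ∧ q₂ < p) →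
      Subsingleton (((Ext A (ModuleCat A) 1).obj
        (Opposite.op (ModuleCat.of A (A ⧸ p)))).obj (ModuleCat.of A A)))
    (B : Subalgebra A (FractionRing A))
    (hloc : ∀ p : Ideal A, p.IsPrime →
      (¬∃ q₁ q₂ : Ideal A, q₁.IsPrime ∧ q₂.IsPrime ∧ q₁ < q₂ ∧ q₂ < p) →
      ∀ b ∈ B, ∃ a s : A, s ∉ p ∧
        b * algebraMap A (FractionRing A) s = algebraMap A (FractionRing A) a) :
    B = ⊥ := by
  by_contra hB
  have hBA : ¬Subalgebra.toSubmodule B ≤ 1 := by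
    rwa [← Algebra.toSubmodule_bot, Subalgebra.toSubmodule.le_iff_le, le_bot_iff]
  obtain ⟨b, hbB, hp⟩ := Submodule.exists_mem_isPrime_colon_singleton hBA
  set p := (1 : Submodule A (FractionRing A)).colon {b}
  by_cases hchain : ∃ q₁ q₂ : Ideal A, q₁.IsPrime ∧ q₂.IsPrime ∧ q₁ < q₂ ∧ q₂ < p
  · have := hExt p hp hchain
    obtain ⟨-, q₂, -, -, -, h₂p⟩ := hchain
    have hb : b ∈ (1 : Submodule A (FractionRing A)) :=
      Submodule.mem_one_of_le_colon_singleton (ne_bot_of_gt h₂p)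
        (Ideal.exists_eq_mul_of_subsingleton_ext_one _) le_rfl
    exact hp.ne_top ((Ideal.eq_top_iff_one _).mpr
      (Submodule.mem_colon_singleton.mpr (by rwa [one_smul])))
  · obtain ⟨a, s, hs, hsb⟩ := hloc _ hp hchain b hbB
    refine hs (Submodule.mem_colon_singleton.mpr (Submodule.mem_one.mpr ⟨a, ?_⟩))
    rw [Algebra.smul_def, mul_comm, hsb]

/-- Algebraic form of the lemma that a finite proper birational map onto an S2 variety
which is an isomorphism away from codimension 2 is an isomorphism.
Let `A` be a Noetherian domain such that `Ext¹_A(A/p, A) = 0` for every prime `p` of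
height at least 2 (i.e. admitting a chain of primes `q₁ < q₂ < p`).  If `B` is a ring
with `A ⊆ B ⊆ Frac(A)`, finite as an `A`-module, such that `A_p = B_p` inside `Frac(A)`
for every prime `p` of height at most 1 (i.e. every element of `B` lies in `A_p`),
then `A = B`. -/
theorem s2_birational_iso (A : Type*) [CommRing A] [IsDomain A] [IsNoetherianRing A]
    (hExt : ∀ p : Ideal A, p.IsPrime →
      (∃ q₁ q₂ : Ideal A, q₁.IsPrime ∧ q₂.IsPrime ∧ q₁ < q₂ ∧ q₂ < p) →
      Subsingleton (((Ext A (ModuleCat A) 1).obj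
        (Opposite.op (ModuleCat.of A (A ⧸ p)))).obj (ModuleCat.of A A)))
    (B : Subalgebra A (FractionRing A)) (hfin : Module.Finite A B)
    (hloc : ∀ p : Ideal A, p.IsPrime →
      (¬∃ q₁ q₂ : Ideal A, q₁.IsPrime ∧ q₂.IsPrime ∧ q₁ < q₂ ∧ q₂ < p) →
      ∀ b ∈ B, ∃ a s : A, s ∉ p ∧
        b * algebraMap A (FractionRing A) s = algebraMap A (FractionRing A) a) :
    B = ⊥ :=
  s2_birational_iso_general A hExt B hloc
end
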